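/- The assume-guarantee rule ASym is sound: for LPTSes L1, L2, A, P with α_A ⊆ α_2, if L1 ∥ A ≼ P and L2 ≼ A, then L1 ∥ L2 ≼ P. -/

import Mathlib

/-! `L1 ∥ L2 ≼ L1 ∥ A ≼ P`. The first step is precongruence: a simulation `R` of `L2` by `A`
gives the simulation `id × R` of `L1 ∥ L2` by `L1 ∥ A`, product distributions being compared
slice by slice; when `L2` idles on an action outside `α₂ ⊇ α_A`, `A` may idle too. The second is
transitivity, where the lifting condition for `ν ⊑_{R'} ξ` is applied to `R(T) ∩ supp ν`, which
carries all the `ν`-mass of `R(T)`. -/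

open Classical

structure FDist (S : Type) [Fintype S] where
  pmf : S → ℝ
  nonneg : ∀ s, 0 ≤ pmf s
  sum_one : ∑ s, pmf s = 1

namespace FDist

variable {S S1 S2 : Type} [Fintype S] [Fintype S1] [Fintype S2]

noncomputable def prob (μ : FDist S) (T : Set S) : ℝ :=
  ∑ s, if s ∈ T then μ.pmf s else 0

def supp (μ : FDist S) : Set S := {s | 0 < μ.pmf s}

noncomputable def dirac (s : S) : FDist S where
  pmf t := if t = s then 1 else 0
  nonneg t := by (try dsimp only); split <;> norm_num
  sum_one := by simp

noncomputable def prod (μ1 : FDist S1) (μ2 : FDist S2) : FDist (S1 × S2) where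
  pmf p := μ1.pmf p.1 * μ2.pmf p.2
  nonneg p := mul_nonneg (μ1.nonneg _) (μ2.nonneg _)
  sum_one := by
    rw [Fintype.sum_prod_type]
    simp_rw [← Finset.mul_sum, μ2.sum_one, mul_one]
    exact μ1.sum_one

end FDist

/-- Image of a set under a relation: `R(T) = {s2 | ∃ s1 ∈ T, (s1,s2) ∈ R}`. -/
def relImage {S1 S2 : Type} (R : Set (S1 × S2)) (T : Set S1) : Set S2 :=
  {s2 | ∃ s1 ∈ T, (s1, s2) ∈ R}

/-- The lifting `μ1 ⊑_R μ2` of a relation on states to distributions,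
via the Hall-type subset condition. -/
def liftRel {S1 S2 : Type} [Fintype S1] [Fintype S2]
    (R : Set (S1 × S2)) (μ1 : FDist S1) (μ2 : FDist S2) : Prop :=
  ∀ T ⊆ μ1.supp, μ1.prob T ≤ μ2.prob (relImage R T)

/-- A (finite, finitely-branching) labeled probabilistic transition system. -/
structure LPTS (S : Type) (Act : Type) [Fintype S] where
  start : S
  alpha : Set Act
  trans : S → Act → Set (FDist S)
  trans_mem : ∀ s a μ, μ ∈ trans s a → a ∈ alpha
  finite_trans : ∀ s a, (trans s a).Finite

/-- `R` is a strong simulation between `L1` and `L2`. -/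
def StrongSim {S1 S2 Act : Type} [Fintype S1] [Fintype S2]
    (L1 : LPTS S1 Act) (L2 : LPTS S2 Act) (R : Set (S1 × S2)) : Prop :=
  ∀ s1 s2, (s1, s2) ∈ R → ∀ a μ1, μ1 ∈ L1.trans s1 a →
    ∃ μ2 ∈ L2.trans s2 a, liftRel R μ1 μ2

/-- `L2` strongly simulates `L1` (written `L1 ≼ L2`). -/
def Sim {S1 S2 Act : Type} [Fintype S1] [Fintype S2]
    (L1 : LPTS S1 Act) (L2 : LPTS S2 Act) : Prop :=
  ∃ R, StrongSim L1 L2 R ∧ (L1.start, L2.start) ∈ R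

/-- Parallel composition of LPTSes (Segala–Lynch). -/
noncomputable def par {S1 S2 Act : Type} [Fintype S1] [Fintype S2]
    (L1 : LPTS S1 Act) (L2 : LPTS S2 Act) : LPTS (S1 × S2) Act where
  start := (L1.start, L2.start)
  alpha := L1.alpha ∪ L2.alpha
  trans p a := {μ |
    (∃ μ1 ∈ L1.trans p.1 a, ∃ μ2 ∈ L2.trans p.2 a, μ = μ1.prod μ2) ∨
    (∃ μ1 ∈ L1.trans p.1 a, a ∉ L2.alpha ∧ μ = μ1.prod (FDist.dirac p.2)) ∨
    (a ∉ L1.alpha ∧ ∃ μ2 ∈ L2.trans p.2 a, μ = (FDist.dirac p.1).prod μ2)}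
  trans_mem := by
    rintro p a μ (⟨μ1, h1, -⟩ | ⟨μ1, h1, -⟩ | ⟨-, μ2, h2, -⟩)
    · exact Or.inl (L1.trans_mem _ _ _ h1)
    · exact Or.inl (L1.trans_mem _ _ _ h1)
    · exact Or.inr (L2.trans_mem _ _ _ h2)
  finite_trans := by
    intro p a
    apply Set.Finite.subset (Set.Finite.union (Set.Finite.union
      (Set.Finite.image (fun q : FDist S1 × FDist S2 => q.1.prod q.2)
        (Set.Finite.prod (L1.finite_trans p.1 a) (L2.finite_trans p.2 a)))
      (Set.Finite.image (fun μ1 => μ1.prod (FDist.dirac p.2)) (L1.finite_trans p.1 a)))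
      (Set.Finite.image (fun μ2 => (FDist.dirac p.1).prod μ2) (L2.finite_trans p.2 a)))
    rintro μ (⟨μ1, h1, μ2, h2, rfl⟩ | ⟨μ1, h1, -, rfl⟩ | ⟨-, μ2, h2, rfl⟩)
    · exact Or.inl (Or.inl ⟨(μ1, μ2), Set.mk_mem_prod h1 h2, rfl⟩)
    · exact Or.inl (Or.inr ⟨μ1, h1, rfl⟩)
    · exact Or.inr ⟨μ2, h2, rfl⟩

namespace FDist

variable {S S1 S2 : Type} [Fintype S] [Fintype S1] [Fintype S2]

lemma pmf_eq_zero_of_notMem_supp (μ : FDist S) {s : S} (hs : s ∉ μ.supp) : μ.pmf s = 0 :=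
  le_antisymm (not_lt.mp hs) (μ.nonneg s)

lemma prob_mono (μ : FDist S) {T U : Set S} (h : T ⊆ U) : μ.prob T ≤ μ.prob U :=
  Finset.sum_le_sum fun s _ => by
    split_ifs with hT hU hU
    · exact le_rfl
    · exact absurd (h hT) hU
    · exact μ.nonneg s
    · exact le_rfl

lemma prob_inter_supp (μ : FDist S) (T : Set S) : μ.prob (T ∩ μ.supp) = μ.prob T :=
  Finset.sum_congr rfl fun s _ => by
    by_cases hs : s ∈ μ.supp
    · simp [hs]
    · simp [hs, μ.pmf_eq_zero_of_notMem_supp hs]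

lemma prob_dirac (s : S) (T : Set S) : (dirac s).prob T = if s ∈ T then 1 else 0 := by
  rw [prob, Finset.sum_eq_single s (fun t _ ht => by simp [dirac, ht]) (by simp)]
  simp [dirac]

lemma prob_prod (μ1 : FDist S1) (μ2 : FDist S2) (T : Set (S1 × S2)) :
    (μ1.prod μ2).prob T = ∑ s, μ1.pmf s * μ2.prob {t | (s, t) ∈ T} := by
  simp only [prob, prod, Fintype.sum_prod_type, Finset.mul_sum, mul_ite, mul_zero, Set.mem_ofPred_eq]

end FDist

open SetRel in
lemma liftRel_comp {S1 S2 S3 : Type} [Fintype S1] [Fintype S2] [Fintype S3]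
    {R : SetRel S1 S2} {R' : SetRel S2 S3} {μ : FDist S1} {ν : FDist S2} {ξ : FDist S3}
    (h : liftRel R μ ν) (h' : liftRel R' ν ξ) : liftRel (R ○ R') μ ξ := by
  intro T hT
  have hcomp : relImage R' (relImage R T ∩ ν.supp) ⊆ relImage (R ○ R') T := by
    rintro c ⟨b, ⟨⟨a, ha, hab⟩, -⟩, hbc⟩
    exact ⟨a, ha, b, hab, hbc⟩
  calc μ.prob T ≤ ν.prob (relImage R T) := h T hT
    _ = ν.prob (relImage R T ∩ ν.supp) := (ν.prob_inter_supp _).symm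
    _ ≤ ξ.prob (relImage R' (relImage R T ∩ ν.supp)) := h' _ Set.inter_subset_right
    _ ≤ ξ.prob (relImage (R ○ R') T) := ξ.prob_mono hcomp

open SetRel in
lemma Sim.trans {S1 S2 S3 Act : Type} [Fintype S1] [Fintype S2] [Fintype S3]
    {L1 : LPTS S1 Act} {L2 : LPTS S2 Act} {L3 : LPTS S3 Act}
    (h : Sim L1 L2) (h' : Sim L2 L3) : Sim L1 L3 := by
  obtain ⟨R, hR, hstart⟩ := h
  obtain ⟨R', hR', hstart'⟩ := h'
  refine ⟨R ○ R', ?_, L2.start, hstart, hstart'⟩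
  rintro s1 s3 ⟨s2, h12, h23⟩ a μ1 hμ1
  obtain ⟨μ2, hμ2, hlift⟩ := hR s1 s2 h12 a μ1 hμ1
  obtain ⟨μ3, hμ3, hlift'⟩ := hR' s2 s3 h23 a μ2 hμ2
  exact ⟨μ3, hμ3, liftRel_comp hlift hlift'⟩

section ParCongr

variable {S1 S2 SA : Type}

def idProdRel (R : Set (S2 × SA)) : Set ((S1 × S2) × (S1 × SA)) :=
  {q | q.1.1 = q.2.1 ∧ (q.1.2, q.2.2) ∈ R}

lemma relImage_idProdRel_slice (R : Set (S2 × SA)) (T : Set (S1 × S2)) (s : S1) :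
    {v | (s, v) ∈ relImage (idProdRel R) T} = relImage R {t | (s, t) ∈ T} := by
  ext v
  constructor
  · rintro ⟨⟨s', t⟩, hst, hs', hR⟩
    obtain rfl : s' = s := hs'
    exact ⟨t, hst, hR⟩
  · rintro ⟨t, ht, hR⟩
    exact ⟨(s, t), ht, rfl, hR⟩

variable [Fintype S1] [Fintype S2] [Fintype SA]

lemma liftRel_prod_idProdRel {R : Set (S2 × SA)} (μ : FDist S1) {μ2 : FDist S2} {ν : FDist SA}
    (h : liftRel R μ2 ν) : liftRel (idProdRel R) (μ.prod μ2) (μ.prod ν) := by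
  intro T hT
  rw [FDist.prob_prod, FDist.prob_prod]
  refine Finset.sum_le_sum fun s _ => ?_
  by_cases hs : s ∈ μ.supp
  · have hslice : {t | (s, t) ∈ T} ⊆ μ2.supp := fun t ht =>
      pos_of_mul_pos_right (hT ht) (μ.nonneg s)
    rw [relImage_idProdRel_slice]
    exact mul_le_mul_of_nonneg_left (h _ hslice) (μ.nonneg s)
  · simp [μ.pmf_eq_zero_of_notMem_supp hs]

lemma liftRel_dirac {R : Set (S2 × SA)} {s : S2} {t : SA} (h : (s, t) ∈ R) :
    liftRel R (FDist.dirac s) (FDist.dirac t) := by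
  intro T _
  rw [FDist.prob_dirac, FDist.prob_dirac]
  by_cases hs : s ∈ T
  · simp [hs, show t ∈ relImage R T from ⟨s, hs, h⟩]
  · simp only [hs, if_false]
    split <;> norm_num

lemma Sim.par_congr_right {Act : Type} (L1 : LPTS S1 Act) {L2 : LPTS S2 Act} {A : LPTS SA Act}
    (halpha : A.alpha ⊆ L2.alpha) (h : Sim L2 A) : Sim (par L1 L2) (par L1 A) := by
  obtain ⟨R, hR, hstart⟩ := h
  refine ⟨idProdRel R, ?_, rfl, hstart⟩
  rintro ⟨s1, s2⟩ ⟨t1, ta⟩ ⟨hs1, hRs⟩ a μ hμ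
  obtain rfl : s1 = t1 := hs1
  rcases hμ with ⟨μ1, hμ1, μ2, hμ2, rfl⟩ | ⟨μ1, hμ1, ha, rfl⟩ | ⟨ha, μ2, hμ2, rfl⟩
  · obtain ⟨ν, hν, hlift⟩ := hR s2 ta hRs a μ2 hμ2
    exact ⟨μ1.prod ν, Or.inl ⟨μ1, hμ1, ν, hν, rfl⟩, liftRel_prod_idProdRel μ1 hlift⟩
  · exact ⟨μ1.prod (FDist.dirac ta), Or.inr (Or.inl ⟨μ1, hμ1, fun haA => ha (halpha haA), rfl⟩),
      liftRel_prod_idProdRel μ1 (liftRel_dirac hRs)⟩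
  · obtain ⟨ν, hν, hlift⟩ := hR s2 ta hRs a μ2 hμ2
    exact ⟨(FDist.dirac s1).prod ν, Or.inr (Or.inr ⟨ha, ν, hν, rfl⟩),
      liftRel_prod_idProdRel _ hlift⟩

end ParCongr

/-- Soundness of the assume-guarantee rule ASym. -/
theorem asym_sound {S1 S2 SA SP Act : Type}
    [Fintype S1] [Fintype S2] [Fintype SA] [Fintype SP]
    (L1 : LPTS S1 Act) (L2 : LPTS S2 Act) (A : LPTS SA Act) (P : LPTS SP Act)
    (halpha : A.alpha ⊆ L2.alpha)
    (h1 : Sim (par L1 A) P) (h2 : Sim L2 A) :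
    Sim (par L1 L2) P :=
  (Sim.par_congr_right L1 halpha h2).trans h1
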